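/- arXiv:2309.09499 — 2 statements merged into one kernel-verified Lean document; each statement's English description precedes it below -/
import Mathlib

section
/- Let U ⊆ ℂ be open and X, Y complex Hilbert spaces. The set R := {f ∈ Hol(U, L(X,Y)) : ‖f(z)‖ ≤ 1 for all z ∈ U} is compact in the locally uniform weak operator topology 𝒯_Λ. If both X and Y are separable, then (R, 𝒯_Λ) is metrisable. -/
/-!
The map `f ↦ (z ↦ ⟨f(z)φ, ψ⟩)_{(φ, ψ)}` identifies `(R, 𝒯_Λ)` with a subspace of the product,
over `X × Y`, of copies of `Hol(U, ℂ)` with compact convergence. Its image consists of the families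
bounded by `‖φ‖ ‖ψ‖` that are sesquilinear at every point: by Riesz, a bounded sesquilinear form
comes from an operator of norm `≤ 1`, and a bounded, weakly holomorphic operator-valued function is
norm-continuous (Schwarz lemma on the coefficients), hence equal to its own Cauchy integral and
holomorphic. So the image is a closed subset of a product of sets that are compact by Montel's
theorem (Arzelà–Ascoli), hence compact by Tychonoff.

For separable `X` and `Y`, the coefficients at countable dense subsets of `X`, `Y` and `U` give a
continuous injection of the compact space `R` into a countable power of `ℂ`, hence an embedding
into a metrisable space.
-/

noncomputable section
open Filter Topology ContinuousLinearMap

namespace Paper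

/-- Holomorphy of a function defined on (the subtype of) a set `U ⊆ ℂ`:
it extends to a function `ℂ → E` differentiable on `U`. -/
def HolFn (U : Set ℂ) {E : Type*} [NormedAddCommGroup E] [NormedSpace ℂ E]
    (f : ↥U → E) : Prop :=
  ∃ g : ℂ → E, DifferentiableOn ℂ g U ∧ ∀ z : ↥U, f z = g (z : ℂ)

/-- The topology of locally uniform (compact) convergence on functions `↥U → E`. -/
def kc (U : Set ℂ) (E : Type*) [UniformSpace E] : TopologicalSpace (↥U → E) :=
  (UniformOnFun.uniformSpace ↥U E {K : Set ↥U | IsCompact K}).toTopologicalSpace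

/-- The locally uniform weak operator topology `𝒯_Λ` on operator-valued functions on `U`:
the initial topology w.r.t. `f ↦ (z ↦ ⟨f(z)φ,ψ⟩) ∈ Hol(U,ℂ)` (compact convergence). -/
def luwot (U : Set ℂ) (X Y : Type*) [NormedAddCommGroup X] [InnerProductSpace ℂ X]
    [NormedAddCommGroup Y] [InnerProductSpace ℂ Y] :
    TopologicalSpace (↥U → (X →L[ℂ] Y)) :=
  ⨅ (p : X × Y),
    TopologicalSpace.induced (fun f => fun z : ↥U => (inner ℂ p.2 (f z p.1) : ℂ)) (kc U ℂ)

/-- The closed unit ball of `Hol(U, L(X,Y))`. -/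
def opBall (U : Set ℂ) (X Y : Type*) [NormedAddCommGroup X] [InnerProductSpace ℂ X]
    [NormedAddCommGroup Y] [InnerProductSpace ℂ Y] : Set (↥U → (X →L[ℂ] Y)) :=
  {f | HolFn U f ∧ ∀ z : ↥U, ‖f z‖ ≤ 1}

open Set Metric TopologicalSpace
open scoped NNReal

section Holomorphic

variable {U : Set ℂ} {E : Type*} [NormedAddCommGroup E] [NormedSpace ℂ E]

lemma holFn_iff_differentiableOn_extend {f : ↥U → E} :
    HolFn U f ↔ DifferentiableOn ℂ (Function.extend Subtype.val f 0) U := by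
  refine ⟨fun ⟨g, hg, hfg⟩ => hg.congr fun w hw => ?_, fun h => ⟨_, h, fun z => ?_⟩⟩
  · rw [Function.extend_val_apply hw, hfg]
  · exact (Subtype.val_injective.extend_apply f 0 z).symm

lemma HolFn.continuous {f : ↥U → E} (hf : HolFn U f) : Continuous f := by
  obtain ⟨g, hg, hfg⟩ := hf
  rw [show f = U.domRestrict g from funext hfg]
  exact hg.continuousOn.domRestrict

lemma HolFn.clm_comp {F : Type*} [NormedAddCommGroup F] [NormedSpace ℂ F] {f : ↥U → E}
    (hf : HolFn U f) (L : E →L[ℂ] F) : HolFn U (fun z => L (f z)) := by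
  obtain ⟨g, hg, hfg⟩ := hf
  exact ⟨fun w => L (g w), L.differentiable.comp_differentiableOn hg, fun z => congrArg L (hfg z)⟩

/-- Schwarz lemma: `f` maps `B(z₀, r)` into the closed ball of radius `2M` around `f z₀`. -/
lemma HolFn.dist_le {f : ↥U → E} (hf : HolFn U f) {M : ℝ} (hM : ∀ z, ‖f z‖ ≤ M)
    {z₀ z : ↥U} {r : ℝ} (hr : ball (z₀ : ℂ) r ⊆ U) (hz : dist z z₀ < r) :
    dist (f z) (f z₀) ≤ 2 * M / r * dist z z₀ := by
  obtain ⟨g, hg, hfg⟩ := hf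
  have hgM : ∀ w ∈ ball (z₀ : ℂ) r, ‖g w‖ ≤ M := fun w hw => hfg ⟨w, hr hw⟩ ▸ hM ⟨w, hr hw⟩
  rw [hfg, hfg]
  refine Complex.dist_le_div_mul_dist_of_mapsTo_ball (hg.mono hr) (fun w hw => ?_) hz
  have hz₀ : (z₀ : ℂ) ∈ ball (z₀ : ℂ) r := mem_ball_self (dist_nonneg.trans_lt hz)
  rw [mem_closedBall, dist_eq_norm]
  linarith [norm_sub_le (g w) (g z₀), hgM w hw, hgM _ hz₀]

end Holomorphic

section CompactConvergence

variable {U : Set ℂ}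

lemma continuous_eval_kc {E : Type*} [UniformSpace E] (z : ↥U) :
    Continuous[kc U E, _] (fun f : ↥U → E => f z) :=
  (UniformOnFun.uniformContinuous_eval_of_mem E _ (mem_singleton z)
    isCompact_singleton).continuous

lemma tendstoLocallyUniformlyOn_extend_of_tendsto_kc {E : Type*} [NormedAddCommGroup E]
    (hU : IsOpen U) {ι : Type*} {l : Filter ι} {F : ι → ↥U → E} {f : ↥U → E}
    (h : Tendsto F l (@nhds _ (kc U E) f)) :
    TendstoLocallyUniformlyOn (fun i => Function.extend Subtype.val (F i) 0)
      (Function.extend Subtype.val f 0) l U := by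
  have := hU.locallyCompactSpace
  rw [tendstoLocallyUniformlyOn_iff_tendstoLocallyUniformly_comp_coe]
  simp only [Function.comp_def, Subtype.val_injective.extend_apply]
  exact tendstoLocallyUniformly_iff_forall_isCompact.2 fun K hK =>
    UniformOnFun.tendsto_iff_tendstoUniformlyOn.1 h K hK

lemma isClosed_setOf_holFn {E : Type*} [NormedAddCommGroup E] [NormedSpace ℂ E]
    [CompleteSpace E] (hU : IsOpen U) :
    IsClosed[kc U E] {f : ↥U → E | HolFn U f} := by
  let := kc U E
  refine isClosed_iff_forall_filter.2 fun f l _ hl hlf => ?_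
  exact holFn_iff_differentiableOn_extend.2 <|
    (tendstoLocallyUniformlyOn_extend_of_tendsto_kc hU hlf).differentiableOn
      (Eventually.mono (le_principal_iff.1 hl) fun _ => holFn_iff_differentiableOn_extend.1) hU

end CompactConvergence

section Montel

variable {U : Set ℂ}

def holBall (U : Set ℂ) (M : ℝ) : Set (↥U → ℂ) := {f | HolFn U f ∧ ∀ z, ‖f z‖ ≤ M}

lemma isClosed_holBall (hU : IsOpen U) (M : ℝ) : IsClosed[kc U ℂ] (holBall U M) := by
  let := kc U ℂ
  simp only [holBall, ofPred_and, ofPred_forall]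
  exact (isClosed_setOf_holFn hU).inter <|
    isClosed_iInter fun z => isClosed_le (continuous_eval_kc z).norm continuous_const

lemma equicontinuous_holBall (hU : IsOpen U) (M : ℝ) :
    Equicontinuous (fun f : holBall U M => (f : ↥U → ℂ)) := by
  intro z₀
  obtain ⟨r, hr, hball⟩ := Metric.isOpen_iff.1 hU z₀ z₀.2
  refine equicontinuousAt_of_continuity_modulus (fun z => 2 * M / r * dist z z₀) ?_ _ ?_
  · have : Continuous fun z : ↥U => 2 * M / r * dist z z₀ := by fun_prop
    simpa using this.tendsto z₀
  · filter_upwards [ball_mem_nhds z₀ hr] with z hz f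
    rw [dist_comm]
    exact f.2.1.dist_le f.2.2 hball hz

theorem isCompact_holBall (hU : IsOpen U) (M : ℝ) : @IsCompact _ (kc U ℂ) (holBall U M) := by
  let := kc U ℂ
  have := ArzelaAscoli.isCompact_closure_of_isClosedEmbedding (F := id)
    (𝔖 := {K : Set ↥U | IsCompact K}) (fun _ hK => hK) (Homeomorph.refl _).isClosedEmbedding
    (s := holBall U M) (fun K _ => (equicontinuous_holBall hU M).equicontinuousOn K)
    (fun _ _ z _ => ⟨closedBall 0 M, isCompact_closedBall 0 M,
      fun f hf => mem_closedBall_zero_iff.2 (hf.2 z)⟩)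
  exact (congrArg (@IsCompact _ (kc U ℂ)) (isClosed_holBall hU M).closure_eq).mp this

end Montel

section Operators

variable {X Y : Type*} [NormedAddCommGroup X] [InnerProductSpace ℂ X]
  [NormedAddCommGroup Y] [InnerProductSpace ℂ Y]

def matrixCoeff (φ : X) (ψ : Y) : (X →L[ℂ] Y) →L[ℂ] ℂ :=
  (innerSL ℂ ψ).comp (ContinuousLinearMap.apply ℂ Y φ)

@[simp]
lemma matrixCoeff_apply (φ : X) (ψ : Y) (T : X →L[ℂ] Y) :
    matrixCoeff φ ψ T = inner ℂ ψ (T φ) := rfl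

lemma norm_inner_apply_le (T : X →L[ℂ] Y) (φ : X) (ψ : Y) :
    ‖(inner ℂ ψ (T φ) : ℂ)‖ ≤ ‖T‖ * ‖φ‖ * ‖ψ‖ :=
  calc ‖(inner ℂ ψ (T φ) : ℂ)‖ ≤ ‖ψ‖ * ‖T φ‖ := norm_inner_le_norm _ _
    _ ≤ ‖ψ‖ * (‖T‖ * ‖φ‖) := by gcongr; exact T.le_opNorm φ
    _ = ‖T‖ * ‖φ‖ * ‖ψ‖ := by ring

lemma norm_le_of_forall_inner_le {y : Y} {C : ℝ} (hC : 0 ≤ C)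
    (h : ∀ ψ, ‖(inner ℂ ψ y : ℂ)‖ ≤ C * ‖ψ‖) : ‖y‖ ≤ C := by
  rcases (norm_nonneg y).eq_or_lt with h0 | hpos
  · rwa [← h0]
  · refine le_of_mul_le_mul_right ?_ hpos
    calc ‖y‖ * ‖y‖ = ‖(inner ℂ y y : ℂ)‖ := by rw [inner_self_eq_norm_sq_to_K]; simp [sq]
      _ ≤ C * ‖y‖ := h y

lemma opNorm_le_of_inner_le {T : X →L[ℂ] Y} {C : ℝ} (hC : 0 ≤ C)
    (h : ∀ φ ψ, ‖(inner ℂ ψ (T φ) : ℂ)‖ ≤ C * ‖φ‖ * ‖ψ‖) : ‖T‖ ≤ C :=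
  T.opNorm_le_bound hC fun φ => norm_le_of_forall_inner_le (by positivity) (h φ)

lemma _root_.ContinuousLinearMap.ext_inner_of_dense {A B : X →L[ℂ] Y} {S : Set X} {T : Set Y}
    (hS : Dense S) (hT : Dense T) (h : ∀ φ ∈ S, ∀ ψ ∈ T, inner ℂ ψ (A φ) = inner ℂ ψ (B φ)) :
    A = B := by
  refine ContinuousLinearMap.coeFn_injective <| Continuous.ext_on hS A.continuous B.continuous
    fun φ hφ => ext_inner_left ℂ fun ψ => ?_
  refine congrFun (Continuous.ext_on hT (f := fun ψ => inner ℂ ψ (A φ))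
    (g := fun ψ => inner ℂ ψ (B φ)) (by fun_prop) (by fun_prop) fun ψ hψ => h φ hφ ψ hψ) ψ

def IsSesqForm (b : X → Y → ℂ) : Prop :=
  (∀ φ φ' ψ, b (φ + φ') ψ = b φ ψ + b φ' ψ) ∧ (∀ (c : ℂ) φ ψ, b (c • φ) ψ = c * b φ ψ) ∧
    (∀ φ ψ ψ', b φ (ψ + ψ') = b φ ψ + b φ ψ') ∧
    (∀ (c : ℂ) φ ψ, b φ (c • ψ) = starRingEnd ℂ c * b φ ψ)

lemma isClosed_setOf_isSesqForm :
    IsClosed {b : X × Y → ℂ | IsSesqForm fun φ ψ => b (φ, ψ)} := by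
  simp only [IsSesqForm, ofPred_and, ofPred_forall]
  refine .inter ?_ (.inter ?_ (.inter ?_ ?_)) <;>
    exact isClosed_iInter fun _ => isClosed_iInter fun _ => isClosed_iInter fun _ =>
      isClosed_eq (by fun_prop) (by fun_prop)

/-- Riesz representation, applied to `ψ ↦ conj (b φ ψ)` for each `φ`. -/
lemma IsSesqForm.exists_clm [CompleteSpace Y] {b : X → Y → ℂ} (hb : IsSesqForm b) {C : ℝ}
    (hC : 0 ≤ C) (hbd : ∀ φ ψ, ‖b φ ψ‖ ≤ C * ‖φ‖ * ‖ψ‖) :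
    ∃ T : X →L[ℂ] Y, ‖T‖ ≤ C ∧ ∀ φ ψ, inner ℂ ψ (T φ) = b φ ψ := by
  obtain ⟨hadd₁, hsmul₁, hadd₂, hsmul₂⟩ := hb
  have hrep : ∀ φ, ∃ y : Y, ∀ ψ, inner ℂ ψ y = b φ ψ := by
    intro φ
    let ℓ : Y →L[ℂ] ℂ := LinearMap.mkContinuous
      { toFun := fun ψ => starRingEnd ℂ (b φ ψ)
        map_add' := by simp [hadd₂]
        map_smul' := by simp [hsmul₂] } (C * ‖φ‖) fun ψ => by simpa using hbd φ ψ
    refine ⟨(InnerProductSpace.toDual ℂ Y).symm ℓ, fun ψ => ?_⟩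
    rw [← inner_conj_symm, InnerProductSpace.toDual_symm_apply]
    simp [ℓ]
  choose y hy using hrep
  let Tₗ : X →ₗ[ℂ] Y :=
    { toFun := y
      map_add' := fun φ φ' => ext_inner_left ℂ fun ψ => by simp [hy, hadd₁, inner_add_right]
      map_smul' := fun c φ => ext_inner_left ℂ fun ψ => by simp [hy, hsmul₁, inner_smul_right] }
  have hTₗ : ∀ φ, ‖Tₗ φ‖ ≤ C * ‖φ‖ := fun φ =>
    norm_le_of_forall_inner_le (by positivity) fun ψ => by
      simpa [Tₗ, hy, mul_right_comm] using hbd φ ψ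
  exact ⟨Tₗ.mkContinuous C hTₗ, LinearMap.mkContinuous_norm_le _ hC _, hy⟩

end Operators

section WeakHolomorphy

variable {E : Type*} [NormedAddCommGroup E] [NormedSpace ℂ E] [CompleteSpace E]

lemma _root_.ContinuousLinearMap.circleIntegral_comp_comm {G : Type*} [NormedAddCommGroup G]
    [NormedSpace ℂ G] [CompleteSpace G] (L : E →L[ℂ] G) {f : ℂ → E} {c : ℂ} {R : ℝ}
    (hf : CircleIntegrable f c R) : L (∮ z in C(c, R), f z) = ∮ z in C(c, R), L (f z) := by
  simp only [circleIntegral, ← L.intervalIntegral_comp_comm hf.out, map_smul]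

/-- On a disc where `F` is continuous, the Cauchy integral of `F` is holomorphic, and the
separating family `L` sees that it equals `F`. -/
theorem differentiableOn_of_continuousOn_of_separating {ι : Type*} (L : ι → E →L[ℂ] ℂ)
    (hL : ∀ x y, (∀ i, L i x = L i y) → x = y) {F : ℂ → E} {U : Set ℂ} (hU : IsOpen U)
    (hc : ContinuousOn F U) (hd : ∀ i, DifferentiableOn ℂ (fun z => L i (F z)) U) :
    DifferentiableOn ℂ F U := by
  intro z₀ hz₀
  obtain ⟨R, hR, hRU⟩ := nhds_basis_closedBall.mem_iff.1 (hU.mem_nhds hz₀)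
  lift R to ℝ≥0 using hR.le
  have hcR : ContinuousOn F (sphere z₀ R) := hc.mono (sphere_subset_closedBall.trans hRU)
  have hG := hasFPowerSeriesOn_cauchy_integral (hcR.circleIntegrable R.2) hR
  refine (hG.hasFPowerSeriesAt.differentiableAt.congr_of_eventuallyEq ?_).differentiableWithinAt
  filter_upwards [ball_mem_nhds z₀ hR] with w hw
  refine hL _ _ fun i => ?_
  have hint : CircleIntegrable (fun z => (z - w)⁻¹ • F z) z₀ R := by
    refine ContinuousOn.circleIntegrable R.2 (ContinuousOn.smul ?_ hcR)
    refine (continuousOn_id.sub continuousOn_const).inv₀ fun z hz => sub_ne_zero.2 ?_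
    rintro rfl
    exact (mem_ball.1 hw).ne (mem_sphere.1 hz)
  simp only [map_smul, (L i).circleIntegral_comp_comm hint]
  exact (((hd i).diffContOnCl_ball hRU).two_pi_i_inv_smul_circleIntegral_sub_inv_smul hw).symm

end WeakHolomorphy

section WeakOperatorTopology

variable {U : Set ℂ} {X Y : Type*} [NormedAddCommGroup X] [InnerProductSpace ℂ X]
  [NormedAddCommGroup Y] [InnerProductSpace ℂ Y]

lemma continuous_of_forall_holFn_inner (hU : IsOpen U) {f : ↥U → X →L[ℂ] Y} {M : ℝ}
    (hM : ∀ z, ‖f z‖ ≤ M) (hf : ∀ φ ψ, HolFn U fun z => inner ℂ ψ (f z φ)) : Continuous f := by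
  refine continuous_iff_continuousAt.2 fun z₀ => ?_
  obtain ⟨r, hr, hball⟩ := Metric.isOpen_iff.1 hU z₀ z₀.2
  have hM₀ : 0 ≤ M := (norm_nonneg _).trans (hM z₀)
  refine continuousAt_of_locally_lipschitz hr (2 * M / r) fun z hz => ?_
  rw [dist_eq_norm]
  refine opNorm_le_of_inner_le (by positivity) fun φ ψ => ?_
  have hbd : ∀ z, ‖(inner ℂ ψ (f z φ) : ℂ)‖ ≤ M * ‖φ‖ * ‖ψ‖ := fun z =>
    (norm_inner_apply_le _ _ _).trans (by gcongr; exact hM z)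
  have := (hf φ ψ).dist_le hbd hball hz
  rw [dist_eq_norm] at this
  calc ‖(inner ℂ ψ ((f z - f z₀) φ) : ℂ)‖ ≤ 2 * (M * ‖φ‖ * ‖ψ‖) / r * dist z z₀ := by
        simpa [inner_sub_right] using this
    _ = 2 * M / r * dist z z₀ * ‖φ‖ * ‖ψ‖ := by ring

theorem holFn_of_forall_holFn_inner [CompleteSpace Y] (hU : IsOpen U) {f : ↥U → X →L[ℂ] Y}
    {M : ℝ} (hM : ∀ z, ‖f z‖ ≤ M) (hf : ∀ φ ψ, HolFn U fun z => inner ℂ ψ (f z φ)) :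
    HolFn U f := by
  have hcont := continuous_of_forall_holFn_inner hU hM hf
  simp only [holFn_iff_differentiableOn_extend] at hf ⊢
  refine differentiableOn_of_continuousOn_of_separating (fun p : X × Y => matrixCoeff p.1 p.2)
    (fun A B h => ContinuousLinearMap.ext fun φ => ext_inner_left ℂ fun ψ => h (φ, ψ)) hU ?_
    fun p => (hf p.1 p.2).congr fun w hw => ?_
  · refine continuousOn_iff_continuous_domRestrict.2 (hcont.congr fun z => ?_)
    exact (Subtype.val_injective.extend_apply f 0 z).symm
  · simp [Function.extend_val_apply hw]

def matrixCoeffs (U : Set ℂ) (X Y : Type*) [NormedAddCommGroup X] [InnerProductSpace ℂ X]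
    [NormedAddCommGroup Y] [InnerProductSpace ℂ Y] (f : ↥U → X →L[ℂ] Y) : X × Y → ↥U → ℂ :=
  fun p z => matrixCoeff p.1 p.2 (f z)

lemma luwot_eq_induced :
    luwot U X Y = .induced (matrixCoeffs U X Y) (@Pi.topologicalSpace _ _ fun _ => kc U ℂ) := by
  simp only [Pi.topologicalSpace, induced_iInf, induced_compose]
  rfl

lemma isClosed_setOf_forall_isSesqForm :
    IsClosed[@Pi.topologicalSpace _ _ fun _ => kc U ℂ]
      {g : X × Y → ↥U → ℂ | ∀ z, IsSesqForm fun φ ψ => g (φ, ψ) z} := by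
  let := kc U ℂ
  simp only [ofPred_forall]
  exact isClosed_iInter fun z => (isClosed_setOf_isSesqForm (X := X) (Y := Y)).preimage
    (f := fun (g : X × Y → ↥U → ℂ) p => g p z)
    (continuous_pi fun p => (continuous_eval_kc z).comp (continuous_apply p))

lemma image_matrixCoeffs_opBall [CompleteSpace Y] (hU : IsOpen U) :
    matrixCoeffs U X Y '' opBall U X Y =
      univ.pi (fun p : X × Y => holBall U (‖p.1‖ * ‖p.2‖)) ∩
        {g | ∀ z, IsSesqForm fun φ ψ => g (φ, ψ) z} := by
  ext g
  constructor
  · rintro ⟨f, ⟨hf, hf₁⟩, rfl⟩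
    refine ⟨fun p _ => ⟨hf.clm_comp _, fun z => ?_⟩, fun z => ?_⟩
    · exact (norm_inner_apply_le (f z) p.1 p.2).trans
        (by rw [mul_assoc]; exact mul_le_of_le_one_left (by positivity) (hf₁ z))
    · simp [IsSesqForm, matrixCoeffs, mul_comm]
  · rintro ⟨hg, hsesq⟩
    have hbd : ∀ z φ ψ, ‖g (φ, ψ) z‖ ≤ 1 * ‖φ‖ * ‖ψ‖ := fun z φ ψ => by
      simpa using (hg (φ, ψ) trivial).2 z
    choose f hf₁ hf using fun z => (hsesq z).exists_clm zero_le_one (hbd z)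
    refine ⟨f, ⟨holFn_of_forall_holFn_inner hU hf₁ fun φ ψ => ?_, hf₁⟩, ?_⟩
    · simpa only [hf] using (hg (φ, ψ) trivial).1
    · funext p z
      exact hf z p.1 p.2

theorem isCompact_opBall [CompleteSpace Y] (hU : IsOpen U) :
    @IsCompact _ (luwot U X Y) (opBall U X Y) := by
  let := kc U ℂ
  rw [luwot_eq_induced, @Topology.IsInducing.isCompact_iff _ _ (.induced _ _) _ _ _
    (.induced (matrixCoeffs U X Y)), image_matrixCoeffs_opBall hU]
  exact (isCompact_univ_pi fun _ => isCompact_holBall hU _).inter_right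
    isClosed_setOf_forall_isSesqForm

theorem metrizableSpace_opBall [CompleteSpace Y] (hU : IsOpen U) [SeparableSpace X]
    [SeparableSpace Y] :
    @MetrizableSpace (opBall U X Y) (.induced Subtype.val (luwot U X Y)) := by
  let := luwot U X Y
  let := kc U ℂ
  have : CompactSpace (opBall U X Y) := isCompact_iff_compactSpace.1 (isCompact_opBall hU)
  obtain ⟨DX, hDXc, hDX⟩ := exists_countable_dense X
  obtain ⟨DY, hDYc, hDY⟩ := exists_countable_dense Y
  obtain ⟨DU, hDUc, hDU⟩ := exists_countable_dense ↥U
  have := hDXc.to_subtype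
  have := hDYc.to_subtype
  have := hDUc.to_subtype
  let Ψ : opBall U X Y → DX × DY × DU → ℂ := fun f q => matrixCoeffs U X Y f (q.1, q.2.1) q.2.2
  have hcoeffs : Continuous[luwot U X Y, @Pi.topologicalSpace _ _ fun _ => kc U ℂ]
      (matrixCoeffs U X Y) :=
    continuous_iff_le_induced.2 luwot_eq_induced.le
  have hΨ : Continuous Ψ := continuous_pi fun q =>
    (continuous_eval_kc (q.2.2 : ↥U)).comp <|
      ((continuous_apply ((q.1 : X), (q.2.1 : Y))).comp hcoeffs).comp continuous_subtype_val
  refine (hΨ.isClosedEmbedding fun f g hfg => Subtype.ext ?_).isEmbedding.metrizableSpace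
  refine Continuous.ext_on hDU f.2.1.continuous g.2.1.continuous fun z hz => ?_
  exact ContinuousLinearMap.ext_inner_of_dense hDX hDY fun φ hφ ψ hψ =>
    congrFun hfg (⟨φ, hφ⟩, ⟨ψ, hψ⟩, ⟨z, hz⟩)

end WeakOperatorTopology

theorem statement_5_general (U : Set ℂ) (hU : IsOpen U)
    {X Y : Type*} [NormedAddCommGroup X] [InnerProductSpace ℂ X]
    [NormedAddCommGroup Y] [InnerProductSpace ℂ Y] [CompleteSpace Y] :
    @IsCompact _ (luwot U X Y) (opBall U X Y) ∧
    (TopologicalSpace.SeparableSpace X → TopologicalSpace.SeparableSpace Y →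
      @TopologicalSpace.MetrizableSpace (↥(opBall U X Y))
        (TopologicalSpace.induced Subtype.val (luwot U X Y))) :=
  ⟨isCompact_opBall hU, fun _ _ => metrizableSpace_opBall hU⟩

/-- **Banach–Alaoglu for holomorphic operator-valued functions.** The set
`R = {f ∈ Hol(U,L(X,Y)) : ‖f(z)‖ ≤ 1 ∀z}` is `𝒯_Λ`-compact; if `X` and `Y` are
separable then `(R,𝒯_Λ)` is metrisable. -/
theorem statement_5 (U : Set ℂ) (hU : IsOpen U)
    {X Y : Type*} [NormedAddCommGroup X] [InnerProductSpace ℂ X] [CompleteSpace X]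
    [NormedAddCommGroup Y] [InnerProductSpace ℂ Y] [CompleteSpace Y] :
    @IsCompact _ (luwot U X Y) (opBall U X Y) ∧
    (TopologicalSpace.SeparableSpace X → TopologicalSpace.SeparableSpace Y →
      @TopologicalSpace.MetrizableSpace (↥(opBall U X Y))
        (TopologicalSpace.induced Subtype.val (luwot U X Y))) :=
  statement_5_general U hU

end Paper
end
end

section
/- Let H be a separable complex Hilbert space, c, d > 0, and (T_n)_{n∈ℕ} a sequence in L(H) with Re T_n ≥ c and Re T_n⁻¹ ≥ d for all n (each T_n is boundedly invertible since Re T_n ≥ c). Let A : dom(A) ⊆ H → H be a skew-selfadjoint operator and T ∈ L(H) such that T + A (with domain dom(A)) is boundedly invertible. If (T_n + A)⁻¹ converges to (T + A)⁻¹ in the weak operator topology on L(H), then Re T ≥ c, T is boundedly invertible, and Re T⁻¹ ≥ d. -/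
/-!
For `u ∈ dom A` put `φ = (T + A) u` and `uₙ = (Tₙ + A)⁻¹ φ`, so that `uₙ ⇀ u`. Since `A` is
skew, `Re⟨Tₙ uₙ, uₙ⟩ = Re⟨φ, uₙ⟩ → Re⟨φ, u⟩ = Re⟨T u, u⟩`, and weak lower semicontinuity of the
norm turns `c‖uₙ‖² ≤ Re⟨Tₙ uₙ, uₙ⟩` into `c‖u‖² ≤ Re⟨T u, u⟩`. Likewise `Re Tₙ⁻¹ ≥ d` reads
`d‖Tₙ uₙ‖² ≤ Re⟨uₙ, Tₙ uₙ⟩`, which bounds `Tₙ uₙ = φ - A uₙ` uniformly; testing against the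
dense set `dom A` and moving `A` across the inner product gives `Tₙ uₙ ⇀ φ - A u = T u`, hence
`d‖T u‖² ≤ Re⟨u, T u⟩`. Both estimates extend from `dom A` to `H` by continuity; the first makes
`T` invertible, and the second then says `Re T⁻¹ ≥ d`.
-/

noncomputable section
open Filter Topology ContinuousLinearMap

namespace Paper

/-- `Re S ≥ c` for a bounded operator on a complex Hilbert space:
`Re⟨Sφ,φ⟩ ≥ c‖φ‖²` for all `φ`. -/
def ReGE {K : Type*} [NormedAddCommGroup K] [InnerProductSpace ℂ K]
    (S : K →L[ℂ] K) (c : ℝ) : Prop :=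
  ∀ φ : K, c * ‖φ‖ ^ 2 ≤ (inner ℂ (S φ) φ : ℂ).re

/-- `B ∈ L(H)` is a (two-sided) bounded inverse of the (possibly unbounded) linear
operator `S`. -/
def IsBoundedInverse {H : Type*} [NormedAddCommGroup H] [InnerProductSpace ℂ H]
    (S : H →ₗ.[ℂ] H) (B : H →L[ℂ] H) : Prop :=
  (∀ u : S.domain, B (S u) = (u : H)) ∧
    ∀ y : H, ∃ hy : B y ∈ S.domain, S ⟨B y, hy⟩ = y

/-- The operator `T + A` with domain `dom(A)`, for `T` bounded and `A` a linear
operator with domain `A.domain`. -/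
def addA {H : Type*} [NormedAddCommGroup H] [InnerProductSpace ℂ H]
    (T : H →L[ℂ] H) (A : H →ₗ.[ℂ] H) : H →ₗ.[ℂ] H :=
  (T : H →ₗ[ℂ] H).toPMap A.domain + A

section Coercivity

variable {H : Type*} [NormedAddCommGroup H] [InnerProductSpace ℂ H]

theorem mul_norm_le_of_mul_norm_sq_le_re_inner {c : ℝ} {x y : H}
    (h : c * ‖x‖ ^ 2 ≤ (inner ℂ y x : ℂ).re) : c * ‖x‖ ≤ ‖y‖ := by
  rcases (norm_nonneg x).eq_or_lt with hx | hx
  · rw [← hx, mul_zero]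
    exact norm_nonneg y
  · refine le_of_mul_le_mul_right ?_ hx
    calc c * ‖x‖ * ‖x‖ = c * ‖x‖ ^ 2 := by ring
      _ ≤ (inner ℂ y x : ℂ).re := h
      _ ≤ ‖y‖ * ‖x‖ := by simpa only [RCLike.re_to_complex] using re_inner_le_norm (𝕜 := ℂ) y x

theorem ReGE.isUnit [CompleteSpace H] {S : H →L[ℂ] H} {c : ℝ} (hc : 0 < c) (h : ReGE S c) :
    IsUnit S :=
  isUnit_of_forall_le_norm_inner_map S (c := ⟨c, hc.le⟩) hc fun x => by
    rw [mul_comm]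
    exact (h x).trans (Complex.re_le_norm _)

theorem ringInverse_apply_apply {T : H →L[ℂ] H} (hT : IsUnit T) (x : H) :
    Ring.inverse T (T x) = x := by
  simpa using congr($(Ring.inverse_mul_cancel T hT) x)

theorem apply_ringInverse_apply {T : H →L[ℂ] H} (hT : IsUnit T) (x : H) :
    T (Ring.inverse T x) = x := by
  simpa using congr($(Ring.mul_inverse_cancel T hT) x)

theorem reGE_ringInverse_iff {T : H →L[ℂ] H} (hT : IsUnit T) {d : ℝ} :
    ReGE (Ring.inverse T) d ↔ ∀ x, d * ‖T x‖ ^ 2 ≤ (inner ℂ x (T x) : ℂ).re := by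
  constructor
  · intro h x
    simpa only [ringInverse_apply_apply hT] using h (T x)
  · intro h y
    simpa only [apply_ringInverse_apply hT] using h (Ring.inverse T y)

end Coercivity

section WeakConvergence

variable {H : Type*} [NormedAddCommGroup H] [InnerProductSpace ℂ H] {ι : Type*} {l : Filter ι}

def WeakTendsto (x : ι → H) (l : Filter ι) (x₀ : H) : Prop :=
  ∀ ψ : H, Tendsto (fun i => (inner ℂ ψ (x i) : ℂ)) l (𝓝 (inner ℂ ψ x₀ : ℂ))

theorem WeakTendsto.mul_norm_sq_le [l.NeBot] {x : ι → H} {x₀ : H} (hx : WeakTendsto x l x₀)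
    {d : ℝ} (hd : 0 ≤ d) {r : ι → ℝ} {r₀ : ℝ} (hr : ∀ i, d * ‖x i‖ ^ 2 ≤ r i)
    (hr₀ : Tendsto r l (𝓝 r₀)) : d * ‖x₀‖ ^ 2 ≤ r₀ := by
  -- `0 ≤ ‖x i - x₀‖ ^ 2` bounds `‖x i‖ ^ 2` below by a weakly continuous quantity
  have hlow : ∀ i, d * (2 * (inner ℂ x₀ (x i) : ℂ).re - ‖x₀‖ ^ 2) ≤ r i := by
    intro i
    refine (mul_le_mul_of_nonneg_left ?_ hd).trans (hr i)
    have := norm_sub_sq (𝕜 := ℂ) (x i) x₀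
    rw [inner_re_symm, RCLike.re_to_complex] at this
    nlinarith [sq_nonneg ‖x i - x₀‖]
  have hlim : Tendsto (fun i => d * (2 * (inner ℂ x₀ (x i) : ℂ).re - ‖x₀‖ ^ 2)) l
      (𝓝 (d * ‖x₀‖ ^ 2)) := by
    have hre := (Complex.continuous_re.tendsto _).comp (hx x₀)
    rw [Function.comp_def, ← RCLike.re_to_complex, inner_self_eq_norm_sq] at hre
    convert ((hre.const_mul 2).sub_const (‖x₀‖ ^ 2)).const_mul d using 2
    ring
  exact le_of_tendsto_of_tendsto' hlim hr₀ hlow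

theorem lipschitzWith_inner_left (y : H) :
    LipschitzWith ‖y‖₊ (fun ψ : H => (inner ℂ ψ y : ℂ)) :=
  LipschitzWith.of_dist_le_mul fun ψ ψ' => by
    rw [dist_eq_norm, dist_eq_norm, ← inner_sub_left, mul_comm, coe_nnnorm]
    exact norm_inner_le_norm _ _

theorem WeakTendsto.of_dense {x : ι → H} {x₀ : H} {M : ℝ} (hM : ∀ i, ‖x i‖ ≤ M) {D : Set H}
    (hD : Dense D)
    (h : ∀ ψ ∈ D, Tendsto (fun i => (inner ℂ ψ (x i) : ℂ)) l (𝓝 (inner ℂ ψ x₀ : ℂ))) :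
    WeakTendsto x l x₀ := by
  have hlip : ∀ i, LipschitzWith M.toNNReal fun ψ : H => (inner ℂ ψ (x i) : ℂ) := fun i =>
    (lipschitzWith_inner_left (x i)).weaken ((hM i).trans (Real.le_coe_toNNReal M))
  exact hD.induction h <|
    (LipschitzWith.uniformEquicontinuous _ _ hlip).equicontinuous.isClosed_setOfPred_tendsto
      (by fun_prop)

end WeakConvergence

section SkewAdjoint

variable {H : Type*} [NormedAddCommGroup H] [InnerProductSpace ℂ H] [CompleteSpace H]
  {A : H →ₗ.[ℂ] H}

theorem inner_apply_eq_neg_inner_apply (hdense : Dense (A.domain : Set H))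
    (hskew : A.adjoint = -A) (x y : A.domain) :
    (inner ℂ (A x) (y : H) : ℂ) = -(inner ℂ (x : H) (A y) : ℂ) := by
  have h := (hskew ▸ LinearPMap.adjoint_isFormalAdjoint hdense : (-A).IsFormalAdjoint A) x y
  rw [LinearPMap.neg_apply, inner_neg_left] at h
  rw [← h, neg_neg]

theorem re_inner_apply_self_eq_zero (hdense : Dense (A.domain : Set H))
    (hskew : A.adjoint = -A) (x : A.domain) : (inner ℂ (A x) (x : H) : ℂ).re = 0 := by
  have h := congrArg Complex.re (inner_apply_eq_neg_inner_apply hdense hskew x x)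
  have hsymm := inner_re_symm (𝕜 := ℂ) (A x) (x : H)
  rw [Complex.neg_re] at h
  rw [RCLike.re_to_complex, RCLike.re_to_complex] at hsymm
  linarith

variable {R : H →L[ℂ] H} {v : A.domain} {φ : H}

theorem re_inner_apply_self_of_add_eq (hdense : Dense (A.domain : Set H))
    (hskew : A.adjoint = -A) (h : R v + A v = φ) :
    (inner ℂ (R v) (v : H) : ℂ).re = (inner ℂ φ (v : H) : ℂ).re := by
  rw [← h, inner_add_left, Complex.add_re, re_inner_apply_self_eq_zero hdense hskew, add_zero]

theorem inner_apply_of_add_eq (hdense : Dense (A.domain : Set H))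
    (hskew : A.adjoint = -A) (h : R v + A v = φ) (ψ : A.domain) :
    (inner ℂ (ψ : H) (R v) : ℂ) = inner ℂ (ψ : H) φ + inner ℂ (A ψ) (v : H) := by
  rw [← h, inner_add_right, inner_apply_eq_neg_inner_apply hdense hskew]
  ring

end SkewAdjoint

section Approximation

variable {H : Type*} [NormedAddCommGroup H] [InnerProductSpace ℂ H] [CompleteSpace H]
  {A : H →ₗ.[ℂ] H} {ι : Type*} {l : Filter ι} {Tn : ι → H →L[ℂ] H} {T : H →L[ℂ] H}
  {u : ι → A.domain} {u₀ : A.domain} {φ : H}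

theorem tendsto_re_inner_apply_self (hdense : Dense (A.domain : Set H))
    (hskew : A.adjoint = -A) (hu : ∀ i, Tn i (u i) + A (u i) = φ) (hu₀ : T u₀ + A u₀ = φ)
    (hw : WeakTendsto (fun i => (u i : H)) l u₀) :
    Tendsto (fun i => (inner ℂ (Tn i (u i)) (u i : H) : ℂ).re) l
      (𝓝 (inner ℂ (T u₀) (u₀ : H) : ℂ).re) := by
  simp only [re_inner_apply_self_of_add_eq hdense hskew (hu _),
    re_inner_apply_self_of_add_eq hdense hskew hu₀]
  exact (Complex.continuous_re.tendsto _).comp (hw φ)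

theorem weakTendsto_apply (hdense : Dense (A.domain : Set H)) (hskew : A.adjoint = -A)
    {c d : ℝ} (hc : 0 < c) (hd : 0 < d) (hTc : ∀ i, ReGE (Tn i) c)
    (hTd : ∀ i x, d * ‖Tn i x‖ ^ 2 ≤ (inner ℂ x (Tn i x) : ℂ).re)
    (hu : ∀ i, Tn i (u i) + A (u i) = φ) (hu₀ : T u₀ + A u₀ = φ)
    (hw : WeakTendsto (fun i => (u i : H)) l u₀) :
    WeakTendsto (fun i => Tn i (u i)) l (T u₀) := by
  have hbound : ∀ i, ‖Tn i (u i)‖ ≤ ‖φ‖ / (c * d) := by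
    intro i
    have hu_le : c * ‖(u i : H)‖ ≤ ‖φ‖ := mul_norm_le_of_mul_norm_sq_le_re_inner <|
      (hTc i (u i)).trans_eq (re_inner_apply_self_of_add_eq hdense hskew (hu i))
    have hTu_le : d * ‖Tn i (u i)‖ ≤ ‖(u i : H)‖ :=
      mul_norm_le_of_mul_norm_sq_le_re_inner (hTd i (u i))
    rw [le_div_iff₀ (mul_pos hc hd)]
    nlinarith
  refine WeakTendsto.of_dense hbound hdense fun ψ hψ => ?_
  simp only [inner_apply_of_add_eq hdense hskew (hu _) ⟨ψ, hψ⟩,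
    inner_apply_of_add_eq hdense hskew hu₀ ⟨ψ, hψ⟩]
  exact (hw _).const_add _

variable [l.NeBot]

theorem mul_norm_sq_le_re_inner_apply_self (hdense : Dense (A.domain : Set H))
    (hskew : A.adjoint = -A) {c : ℝ} (hc : 0 ≤ c) (hTc : ∀ i, ReGE (Tn i) c)
    (hu : ∀ i, Tn i (u i) + A (u i) = φ) (hu₀ : T u₀ + A u₀ = φ)
    (hw : WeakTendsto (fun i => (u i : H)) l u₀) :
    c * ‖(u₀ : H)‖ ^ 2 ≤ (inner ℂ (T u₀) (u₀ : H) : ℂ).re :=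
  hw.mul_norm_sq_le hc (fun i => hTc i (u i)) (tendsto_re_inner_apply_self hdense hskew hu hu₀ hw)

theorem mul_norm_sq_apply_le_re_inner_self (hdense : Dense (A.domain : Set H))
    (hskew : A.adjoint = -A) {c d : ℝ} (hc : 0 < c) (hd : 0 < d) (hTc : ∀ i, ReGE (Tn i) c)
    (hTd : ∀ i x, d * ‖Tn i x‖ ^ 2 ≤ (inner ℂ x (Tn i x) : ℂ).re)
    (hu : ∀ i, Tn i (u i) + A (u i) = φ) (hu₀ : T u₀ + A u₀ = φ)
    (hw : WeakTendsto (fun i => (u i : H)) l u₀) :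
    d * ‖T u₀‖ ^ 2 ≤ (inner ℂ (u₀ : H) (T u₀) : ℂ).re := by
  refine (weakTendsto_apply hdense hskew hc hd hTc hTd hu hu₀ hw).mul_norm_sq_le hd.le
    (fun i => hTd i (u i)) ?_
  have := tendsto_re_inner_apply_self hdense hskew hu hu₀ hw
  simp only [← RCLike.re_to_complex, inner_re_symm] at this ⊢
  exact this

end Approximation

section BoundedInverse

variable {H : Type*} [NormedAddCommGroup H] [InnerProductSpace ℂ H]
  {T : H →L[ℂ] H} {A : H →ₗ.[ℂ] H} {S : H →L[ℂ] H}

theorem addA_domain (T : H →L[ℂ] H) (A : H →ₗ.[ℂ] H) : (addA T A).domain = A.domain :=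
  inf_idem _

theorem IsBoundedInverse.apply_add_apply (hS : IsBoundedInverse (addA T A) S) (u : A.domain) :
    S (T u + A u) = u :=
  hS.1 ⟨u, (addA_domain T A).symm ▸ u.2⟩

theorem IsBoundedInverse.exists_add_apply_eq (hS : IsBoundedInverse (addA T A) S) (φ : H) :
    ∃ h : S φ ∈ A.domain, T (S φ) + A ⟨S φ, h⟩ = φ := by
  obtain ⟨h, hφ⟩ := hS.2 φ
  exact ⟨addA_domain T A ▸ h, hφ⟩

theorem IsBoundedInverse.exists_weakTendsto {ι : Type*} {l : Filter ι}
    (hS : IsBoundedInverse (addA T A) S) {Tn Sn : ι → H →L[ℂ] H}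
    (hSn : ∀ i, IsBoundedInverse (addA (Tn i) A) (Sn i))
    (hw : ∀ φ, WeakTendsto (fun i => Sn i φ) l (S φ)) (u₀ : A.domain) :
    ∃ u : ι → A.domain, (∀ i, Tn i (u i) + A (u i) = T u₀ + A u₀) ∧
      WeakTendsto (fun i => (u i : H)) l u₀ := by
  choose hmem hu using fun i => (hSn i).exists_add_apply_eq (T u₀ + A u₀)
  refine ⟨fun i => ⟨_, hmem i⟩, hu, ?_⟩
  simpa only [hS.apply_add_apply] using hw (T u₀ + A u₀)

end BoundedInverse

variable {H : Type*} [NormedAddCommGroup H] [InnerProductSpace ℂ H] [CompleteSpace H]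

theorem statement_11_general
    (c d : ℝ) (hc : 0 < c) (hd : 0 < d)
    (Tn : ℕ → H →L[ℂ] H)
    (hTc : ∀ n, ReGE (Tn n) c)
    (hTd : ∀ n, ReGE (Ring.inverse (Tn n)) d)
    (A : H →ₗ.[ℂ] H) (hdense : Dense (A.domain : Set H)) (hskew : A.adjoint = -A)
    (T : H →L[ℂ] H)
    (S : H →L[ℂ] H) (hS : IsBoundedInverse (addA T A) S)
    (Sn : ℕ → H →L[ℂ] H) (hSn : ∀ n, IsBoundedInverse (addA (Tn n) A) (Sn n))
    (hwot : ∀ φ ψ : H,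
      Tendsto (fun n => (inner ℂ ψ (Sn n φ) : ℂ)) atTop (𝓝 (inner ℂ ψ (S φ) : ℂ))) :
    ReGE T c ∧ IsUnit T ∧ ReGE (Ring.inverse T) d := by
  have hTd' n := (reGE_ringInverse_iff ((hTc n).isUnit hc)).1 (hTd n)
  have hTc_dom : ∀ u : A.domain, c * ‖(u : H)‖ ^ 2 ≤ (inner ℂ (T u) (u : H) : ℂ).re := by
    intro u
    obtain ⟨v, hv, hw⟩ := hS.exists_weakTendsto hSn hwot u
    exact mul_norm_sq_le_re_inner_apply_self hdense hskew hc.le hTc hv rfl hw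
  have hTd_dom : ∀ u : A.domain, d * ‖T u‖ ^ 2 ≤ (inner ℂ (u : H) (T u) : ℂ).re := by
    intro u
    obtain ⟨v, hv, hw⟩ := hS.exists_weakTendsto hSn hwot u
    exact mul_norm_sq_apply_le_re_inner_self hdense hskew hc hd hTc hTd' hv rfl hw
  have hTc' : ReGE T c :=
    hdense.induction (fun x hx => hTc_dom ⟨x, hx⟩) (isClosed_le (by fun_prop) (by fun_prop))
  have hT : IsUnit T := hTc'.isUnit hc
  refine ⟨hTc', hT, (reGE_ringInverse_iff hT).2 ?_⟩
  exact hdense.induction (fun x hx => hTd_dom ⟨x, hx⟩) (isClosed_le (by fun_prop) (by fun_prop))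

/-- Let `(T_n)` be bounded operators with `Re T_n ≥ c > 0` and
`Re T_n⁻¹ ≥ d > 0`, `A` skew-selfadjoint, and `T ∈ L(H)` with `T + A` boundedly
invertible. If `(T_n + A)⁻¹ → (T + A)⁻¹` in the weak operator topology, then `Re T ≥ c`,
`T` is boundedly invertible and `Re T⁻¹ ≥ d`. -/
theorem statement_11 [TopologicalSpace.SeparableSpace H]
    (c d : ℝ) (hc : 0 < c) (hd : 0 < d)
    (Tn : ℕ → H →L[ℂ] H)
    (hTinv : ∀ n, IsUnit (Tn n))
    (hTc : ∀ n, ReGE (Tn n) c)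
    (hTd : ∀ n, ReGE (Ring.inverse (Tn n)) d)
    (A : H →ₗ.[ℂ] H) (hdense : Dense (A.domain : Set H)) (hskew : A.adjoint = -A)
    (T : H →L[ℂ] H)
    (S : H →L[ℂ] H) (hS : IsBoundedInverse (addA T A) S)
    (Sn : ℕ → H →L[ℂ] H) (hSn : ∀ n, IsBoundedInverse (addA (Tn n) A) (Sn n))
    (hwot : ∀ φ ψ : H,
      Tendsto (fun n => (inner ℂ ψ (Sn n φ) : ℂ)) atTop (𝓝 (inner ℂ ψ (S φ) : ℂ))) :
    ReGE T c ∧ IsUnit T ∧ ReGE (Ring.inverse T) d :=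
  statement_11_general c d hc hd Tn hTc hTd A hdense hskew T S hS Sn hSn hwot

end Paper
end
end
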